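/- arXiv:1611.00580 — 5 statements merged into one kernel-verified Lean document; each statement's English description precedes it below -/
import Mathlib

section
/- If a history h is causally convergent (CCv) with respect to a specification S, then h is causally consistent (CC) with respect to S. -/
/-- A history: a set of operations `O` with a strict partial program order `po`
(union of total orders per site) and a labeling into `M × D × D`
(method, argument, return value). -/
structure History (O M D : Type) where
  po : O → O → Prop
  lab : O → M × D × D
  po_irrefl : ∀ a, ¬ po a a
  po_trans : ∀ a b c, po a b → po b c → po a c

/-- strict partial order -/
def IsSPO {O : Type} (r : O → O → Prop) : Prop :=
  (∀ a, ¬ r a a) ∧ ∀ a b c, r a b → r b c → r a c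

/-- strict total order -/
def IsSTO {O : Type} (r : O → O → Prop) : Prop :=
  IsSPO r ∧ ∀ a b, a ≠ b → r a b ∨ r b a

/-- the causal past of `o`: operations `≤_co o`. -/
def CausalPast {O : Type} (co : O → O → Prop) (o : O) : Set O :=
  {o' | co o' o ∨ o' = o}

/-- the program-order past of `o`: operations `≤_PO o`. -/
def POPast {O M D : Type} (h : History O M D) (o : O) : Set O :=
  {o' | h.po o' o ∨ o' = o}

/-- `l` is a linearization of the set `A` extending the order `r`; the full
labeling `g` agrees with `lab` on operations in `keep` and agrees on the
method and argument everywhere (i.e. may reveal return values hidden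
outside `keep`).  This encodes `CausalHist(o){keep} ⪯ ρ` for the sequence
`ρ = l.map g`. -/
def LinWitness {O M D : Type} (A : Set O) (r : O → O → Prop)
    (keep : Set O) (lab : O → M × D × D)
    (l : List O) (g : O → M × D × D) : Prop :=
  l.Nodup ∧ (∀ o, o ∈ l ↔ o ∈ A) ∧
  (∀ i j : Fin l.length, r (l.get i) (l.get j) → (i : ℕ) < (j : ℕ)) ∧
  (∀ o ∈ l, o ∈ keep → g o = lab o) ∧
  (∀ o ∈ l, (g o).1 = (lab o).1 ∧ (g o).2.1 = (lab o).2.1)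

/-- `CausalHist(o){keep}` can be sequentialized into some sequence of `S`. -/
def Linearizable {O M D : Type} (A : Set O) (r : O → O → Prop)
    (keep : Set O) (lab : O → M × D × D)
    (S : Set (List (M × D × D))) : Prop :=
  ∃ l g, LinWitness A r keep lab l g ∧ l.map g ∈ S

/-- causal consistency: some causal order `co ⊇ po` such that for every `o`,
`CausalHist(o){o} ⪯ ρ_o` for some `ρ_o ∈ S`. -/
def CC {O M D : Type} (h : History O M D) (S : Set (List (M × D × D))) : Prop :=
  ∃ co, IsSPO co ∧ (∀ a b, h.po a b → co a b) ∧
    ∀ o, Linearizable (CausalPast co o) co {o} h.lab S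

/-- causal memory: some causal order `co ⊇ po` such that for every `o`,
`CausalHist(o){POPast(o)} ⪯ ρ_o` for some `ρ_o ∈ S`. -/
def CM {O M D : Type} (h : History O M D) (S : Set (List (M × D × D))) : Prop :=
  ∃ co, IsSPO co ∧ (∀ a b, h.po a b → co a b) ∧
    ∀ o, Linearizable (CausalPast co o) co (POPast h o) h.lab S

/-- causal convergence: a causal order `co ⊇ po` and a strict total
arbitration order `arb ⊇ co` such that for every `o`,
`CausalArb(o){o} ⪯ ρ_o` for some `ρ_o ∈ S`. -/
def CCv {O M D : Type} (h : History O M D) (S : Set (List (M × D × D))) : Prop :=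
  ∃ co arb, IsSPO co ∧ (∀ a b, h.po a b → co a b) ∧
    IsSTO arb ∧ (∀ a b, co a b → arb a b) ∧
    ∀ o, Linearizable (CausalPast co o) arb {o} h.lab S

/-- If a history `h` is CCv with respect to a specification `S`,
then `h` is CC with respect to `S`. -/
theorem ccv_implies_cc {O M D : Type} (h : History O M D)
    (S : Set (List (M × D × D))) (hccv : CCv h S) : CC h S := by
  obtain ⟨co, arb, hspo, hpo, _, hca, hlin⟩ := hccv
  refine ⟨co, hspo, hpo, fun o => ?_⟩
  obtain ⟨l, g, ⟨hn, hm, hord, hk, ha⟩, hS⟩ := hlin o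
  exact ⟨l, g, ⟨hn, hm, fun i j hr => hord i j (hca _ _ hr), hk, ha⟩, hS⟩
end

section
/- Let H be a data independent set of read/write memory histories. Then H ⊆ CC(S_RW) if and only if the set H_≠ of differentiated histories of H satisfies H_≠ ⊆ CC(S_RW). The same equivalence holds with CM and CCv in place of CC. -/
/-- read/write memory methods -/
inductive RWM : Type
  | wr
  | rd

/-- the data domain for the read/write memory over variables `X`:
`(X × ℕ) ⊎ X ⊎ ℕ ⊎ {⊥}`. -/
inductive RWD (X : Type) : Type
  | var (x : X)
  | pair (x : X) (v : ℕ)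
  | val (v : ℕ)
  | bot

/-- label of a write operation `wr(x,v) ▷ ⊥` -/
def wrLab {X : Type} (x : X) (v : ℕ) : RWM × RWD X × RWD X :=
  (RWM.wr, RWD.pair x v, RWD.bot)

/-- label of a read operation `rd(x) ▷ v` -/
def rdLab {X : Type} (x : X) (v : ℕ) : RWM × RWD X × RWD X :=
  (RWM.rd, RWD.var x, RWD.val v)

/-- the label is a write on variable `x` -/
def isWrLabOn {X : Type} (x : X) (l : RWM × RWD X × RWD X) : Prop :=
  ∃ v, l = wrLab x v

/-- the read/write memory specification `S_RW`, defined inductively. -/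
inductive SRW {X : Type} : List (RWM × RWD X × RWD X) → Prop
  | nil : SRW []
  | wr (ρ) (x : X) (v : ℕ) : SRW ρ → SRW (ρ ++ [wrLab x v])
  | rd0 (ρ) (x : X) : SRW ρ → (∀ l ∈ ρ, ¬ isWrLabOn x l) →
      SRW (ρ ++ [rdLab x 0])
  | rd (ρ₁ ρ₂) (x : X) (v : ℕ) :
      SRW (ρ₁ ++ [wrLab x v] ++ ρ₂) → (∀ l ∈ ρ₂, ¬ isWrLabOn x l) →
      SRW (ρ₁ ++ [wrLab x v] ++ ρ₂ ++ [rdLab x v])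

/-- a history is differentiated if each value is written at most once per
variable and the initial value `0` is never written. -/
def Differentiated {O X : Type} (h : History O RWM (RWD X)) : Prop :=
  (∀ o₁ o₂ (x : X) (v : ℕ), h.lab o₁ = wrLab x v → h.lab o₂ = wrLab x v → o₁ = o₂) ∧
  (∀ o (x : X), h.lab o ≠ wrLab x 0)

/-- the read-from relation -/
def RF {O X : Type} (h : History O RWM (RWD X)) (o₁ o₂ : O) : Prop :=
  ∃ (x : X) (d : ℕ), h.lab o₁ = wrLab x d ∧ h.lab o₂ = rdLab x d

/-- the relation `CO = (PO ∪ RF)⁺` -/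
def CO {O X : Type} (h : History O RWM (RWD X)) : O → O → Prop :=
  Relation.TransGen (fun a b => h.po a b ∨ RF h a b)

/-- apply a renaming `f : D → D` to a label, componentwise on data values. -/
def renameLab {M D : Type} (f : D → D) (l : M × D × D) : M × D × D :=
  (l.1, f l.2.1, f l.2.2)

/-- `h[f]`: rename all data values appearing in the labels of `h`. -/
def History.rename {O M D : Type} (h : History O M D) (f : D → D) :
    History O M D :=
  { po := h.po
    lab := fun o => renameLab f (h.lab o)
    po_irrefl := h.po_irrefl
    po_trans := h.po_trans }

/-- the data-renaming induced on `RWD X` by `f₀ : ℕ → ℕ`. -/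
def renD {X : Type} (f₀ : ℕ → ℕ) : RWD X → RWD X
  | .var x => .var x
  | .pair x v => .pair x (f₀ v)
  | .val v => .val (f₀ v)
  | .bot => .bot

/-- a set of read/write memory histories is data independent if every history
is a data-renaming of some differentiated history of the set, and the set is
closed under data-renamings. -/
def DataIndependent {O X : Type} (H : Set (History O RWM (RWD X))) : Prop :=
  (∀ h ∈ H, ∃ h' ∈ H, Differentiated h' ∧
      ∃ f₀ : ℕ → ℕ, h = h'.rename (renD f₀)) ∧
  (∀ h ∈ H, ∀ f₀ : ℕ → ℕ, h.rename (renD f₀) ∈ H)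

/-! ### Auxiliary lemmas -/

lemma renameLab_wrLab {X : Type} (f : ℕ → ℕ) (x : X) (v : ℕ) :
    renameLab (renD f) (wrLab x v) = wrLab x (f v) := rfl

lemma renameLab_rdLab {X : Type} (f : ℕ → ℕ) (x : X) (v : ℕ) :
    renameLab (renD f) (rdLab x v) = rdLab x (f v) := rfl

lemma rename_eq_wrLab {X : Type} {f : ℕ → ℕ} {x : X} {v : ℕ}
    {L : RWM × RWD X × RWD X} (h : renameLab (renD f) L = wrLab x v) :
    ∃ u, L = wrLab x u ∧ f u = v := by
  obtain ⟨m, a, r⟩ := L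
  cases a <;> cases r <;>
    simp only [renameLab, wrLab, renD, Prod.mk.injEq, RWD.pair.injEq,
      reduceCtorEq, false_and, and_false, and_true] at h
  obtain ⟨hm, hx, hv⟩ := h
  subst hm hx hv
  exact ⟨_, rfl, rfl⟩

lemma isWr_of_rename {X : Type} {f : ℕ → ℕ} {x : X} {L : RWM × RWD X × RWD X}
    (h : isWrLabOn x (renameLab (renD f) L)) : isWrLabOn x L := by
  obtain ⟨v, hv⟩ := h
  obtain ⟨u, hu, -⟩ := rename_eq_wrLab hv
  exact ⟨u, hu⟩

/-- `S_RW` is closed under data renamings that fix the initial value `0`. -/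
lemma SRW_rename {X : Type} {f : ℕ → ℕ} (h0 : f 0 = 0) :
    ∀ {ρ : List (RWM × RWD X × RWD X)}, SRW ρ →
      SRW (ρ.map (renameLab (renD f))) := by
  intro ρ hρ
  induction hρ with
  | nil => exact SRW.nil
  | wr ρ x v _ ih =>
      rw [List.map_append, List.map_singleton, renameLab_wrLab]
      exact SRW.wr _ x (f v) ih
  | rd0 ρ x _ hnw ih =>
      rw [List.map_append, List.map_singleton, renameLab_rdLab, h0]
      refine SRW.rd0 _ x ih ?_
      intro l hl hw
      obtain ⟨l', hl', rfl⟩ := List.mem_map.1 hl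
      exact hnw l' hl' (isWr_of_rename hw)
  | rd ρ₁ ρ₂ x v hpre hnw ih =>
      rw [List.map_append, List.map_append, List.map_append,
        List.map_singleton, List.map_singleton, renameLab_wrLab,
        renameLab_rdLab]
      refine SRW.rd _ _ x (f v) ?_ ?_
      · rw [List.map_append, List.map_append, List.map_singleton,
          renameLab_wrLab] at ih
        exact ih
      · intro l hl hw
        obtain ⟨l', hl', rfl⟩ := List.mem_map.1 hl
        exact hnw l' hl' (isWr_of_rename hw)

/-- Linearizability into `S_RW` is preserved by `0`-fixing renamings. -/
lemma Linearizable_rename {O X : Type} {f : ℕ → ℕ} (h0 : f 0 = 0)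
    {A : Set O} {r : O → O → Prop} {keep : Set O}
    {lab : O → RWM × RWD X × RWD X}
    (h : Linearizable A r keep lab {ρ | SRW ρ}) :
    Linearizable A r keep (fun o => renameLab (renD f) (lab o)) {ρ | SRW ρ} := by
  obtain ⟨l, g, ⟨hnd, hmem, hord, hkeep, hma⟩, hS⟩ := h
  refine ⟨l, fun o => renameLab (renD f) (g o), ⟨hnd, hmem, hord, ?_, ?_⟩, ?_⟩
  · intro o hl hk
    show renameLab (renD f) (g o) = renameLab (renD f) (lab o)
    rw [hkeep o hl hk]
  · intro o hl
    constructor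
    · show (renameLab (renD f) (g o)).1 = (renameLab (renD f) (lab o)).1
      simp [renameLab, (hma o hl).1]
    · show (renameLab (renD f) (g o)).2.1 = (renameLab (renD f) (lab o)).2.1
      simp [renameLab, (hma o hl).2]
  · have : l.map (fun o => renameLab (renD f) (g o)) =
        (l.map g).map (renameLab (renD f)) := by rw [List.map_map]; rfl
    rw [this]
    exact SRW_rename h0 hS

lemma rename_comp {O M D : Type} (h : History O M D) (f g : D → D) :
    (h.rename g).rename f = h.rename (f ∘ g) := rfl

lemma renD_comp {X : Type} (f g : ℕ → ℕ) :
    (renD f ∘ renD g : RWD X → RWD X) = renD (f ∘ g) := by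
  funext d; cases d <;> rfl

lemma CC_rename {O X : Type} {f : ℕ → ℕ} (h0 : f 0 = 0)
    {h : History O RWM (RWD X)} (hcc : CC h {ρ | SRW ρ}) :
    CC (h.rename (renD f)) {ρ | SRW ρ} := by
  obtain ⟨co, hspo, hpo, hlin⟩ := hcc
  exact ⟨co, hspo, hpo, fun o => Linearizable_rename h0 (hlin o)⟩

lemma CM_rename {O X : Type} {f : ℕ → ℕ} (h0 : f 0 = 0)
    {h : History O RWM (RWD X)} (hcm : CM h {ρ | SRW ρ}) :
    CM (h.rename (renD f)) {ρ | SRW ρ} := by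
  obtain ⟨co, hspo, hpo, hlin⟩ := hcm
  exact ⟨co, hspo, hpo, fun o => Linearizable_rename h0 (hlin o)⟩

lemma CCv_rename {O X : Type} {f : ℕ → ℕ} (h0 : f 0 = 0)
    {h : History O RWM (RWD X)} (hcc : CCv h {ρ | SRW ρ}) :
    CCv (h.rename (renD f)) {ρ | SRW ρ} := by
  obtain ⟨co, arb, hspo, hpo, hsto, harb, hlin⟩ := hcc
  exact ⟨co, arb, hspo, hpo, hsto, harb,
    fun o => Linearizable_rename h0 (hlin o)⟩

/-- renaming a differentiated history by the successor function keeps it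
differentiated. -/
lemma Differentiated_rename_succ {O X : Type} {h : History O RWM (RWD X)}
    (hd : Differentiated h) :
    Differentiated (h.rename (renD Nat.succ)) := by
  constructor
  · intro o₁ o₂ x v h1 h2
    obtain ⟨u₁, hu₁, hv₁⟩ := rename_eq_wrLab h1
    obtain ⟨u₂, hu₂, hv₂⟩ := rename_eq_wrLab h2
    have : u₁ = u₂ := Nat.succ_injective (hv₁.trans hv₂.symm)
    exact hd.1 o₁ o₂ x u₁ hu₁ (this ▸ hu₂)
  · intro o x hw
    obtain ⟨u, -, hv⟩ := rename_eq_wrLab hw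
    exact Nat.succ_ne_zero u hv

/-- the key reduction: a property preserved by `0`-fixing renamings and
holding on differentiated members of a data independent `H` holds on all
of `H`. -/
lemma backward_aux {O X : Type} {H : Set (History O RWM (RWD X))}
    (hdi : DataIndependent H) (P : History O RWM (RWD X) → Prop)
    (hren : ∀ (h : History O RWM (RWD X)) (f : ℕ → ℕ), f 0 = 0 →
      P h → P (h.rename (renD f)))
    (hd : ∀ h ∈ H, Differentiated h → P h) : ∀ h ∈ H, P h := by
  intro h hh
  obtain ⟨h', hh', hdiff, f₀, heq⟩ := hdi.1 h hh
  have hh'' : h'.rename (renD Nat.succ) ∈ H := hdi.2 h' hh' Nat.succ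
  have hP'' : P (h'.rename (renD Nat.succ)) :=
    hd _ hh'' (Differentiated_rename_succ hdiff)
  set f' : ℕ → ℕ := fun n => match n with | 0 => 0 | u + 1 => f₀ u with hf'
  have hcomp : (f' ∘ Nat.succ) = f₀ := rfl
  have : h = (h'.rename (renD Nat.succ)).rename (renD f') := by
    rw [rename_comp, renD_comp, hcomp, heq]
  rw [this]
  exact hren _ f' rfl hP''

/-- For a data independent set `H` of read/write memory histories,
`H ⊆ CC(S_RW)` iff its differentiated histories are all in `CC(S_RW)`,
and likewise for CM and CCv. -/
theorem dataIndependent_reduction {O X : Type}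
    (H : Set (History O RWM (RWD X)))
    (hdi : DataIndependent H) :
    ((∀ h ∈ H, CC h {ρ | SRW ρ}) ↔
      (∀ h ∈ H, Differentiated h → CC h {ρ | SRW ρ})) ∧
    ((∀ h ∈ H, CM h {ρ | SRW ρ}) ↔
      (∀ h ∈ H, Differentiated h → CM h {ρ | SRW ρ})) ∧
    ((∀ h ∈ H, CCv h {ρ | SRW ρ}) ↔
      (∀ h ∈ H, Differentiated h → CCv h {ρ | SRW ρ})) := by
  refine ⟨⟨fun hall h hm _ => hall h hm, ?_⟩,
    ⟨fun hall h hm _ => hall h hm, ?_⟩,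
    ⟨fun hall h hm _ => hall h hm, ?_⟩⟩
  · exact fun hd => backward_aux hdi _ (fun _ _ h0 => CC_rename h0) hd
  · exact fun hd => backward_aux hdi _ (fun _ _ h0 => CM_rename h0) hd
  · exact fun hd => backward_aux hdi _ (fun _ _ h0 => CCv_rename h0) hd
end

section
/- If a differentiated history h is causally consistent (CC) with respect to S_RW witnessed by some causal order co, then the relation CO = (PO ∪ RF)⁺ is contained in co; in particular CO is a strict partial order (acyclic). -/
lemma srw_mem_form {X : Type} {ρ : List (RWM × RWD X × RWD X)} (hρ : SRW ρ) :
    ∀ e ∈ ρ, (∃ x v, e = wrLab x v) ∨ (∃ x v, e = rdLab x v) := by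
  induction hρ with
  | nil => simp
  | wr ρ x v _ ih =>
    intro e he
    rcases List.mem_append.1 he with h1 | h1
    · exact ih e h1
    · exact Or.inl ⟨x, v, List.mem_singleton.1 h1⟩
  | rd0 ρ x _ _ ih =>
    intro e he
    rcases List.mem_append.1 he with h1 | h1
    · exact ih e h1
    · exact Or.inr ⟨x, 0, List.mem_singleton.1 h1⟩
  | rd ρ₁ ρ₂ x v _ _ ih =>
    intro e he
    rcases List.mem_append.1 he with h1 | h1
    · exact ih e h1
    · exact Or.inr ⟨x, v, List.mem_singleton.1 h1⟩

lemma srw_read_has_write {X : Type} {ρ : List (RWM × RWD X × RWD X)} (hρ : SRW ρ) :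
    ∀ (x : X) (d : ℕ), rdLab x d ∈ ρ → d ≠ 0 → wrLab x d ∈ ρ := by
  induction hρ with
  | nil => simp
  | wr ρ x v _ ih =>
    intro y d hm hd
    rcases List.mem_append.1 hm with h1 | h1
    · exact List.mem_append.2 (Or.inl (ih y d h1 hd))
    · exact absurd (List.mem_singleton.1 h1) (by simp [rdLab, wrLab])
  | rd0 ρ x _ _ ih =>
    intro y d hm hd
    rcases List.mem_append.1 hm with h1 | h1
    · exact List.mem_append.2 (Or.inl (ih y d h1 hd))
    · have := List.mem_singleton.1 h1
      simp only [rdLab, Prod.mk.injEq] at this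
      exact absurd this.2.2 (by simpa [RWD.val.injEq] using hd)
  | rd ρ₁ ρ₂ x v _ _ ih =>
    intro y d hm hd
    rcases List.mem_append.1 hm with h1 | h1
    · exact List.mem_append.2 (Or.inl (ih y d h1 hd))
    · have heq := List.mem_singleton.1 h1
      simp only [rdLab, Prod.mk.injEq, RWD.var.injEq, RWD.val.injEq] at heq
      obtain ⟨-, hx, hv⟩ := heq
      subst hx; subst hv
      exact List.mem_append.2 (Or.inl (by simp))

/-- every operation's label has write or read form -/
lemma lab_form {O X : Type} (h : History O RWM (RWD X))
    (co : O → O → Prop)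
    (hwit : ∀ o, Linearizable (CausalPast co o) co {o} h.lab {ρ | SRW ρ}) (o : O) :
    (∃ x v, h.lab o = wrLab x v) ∨ (∃ x v, h.lab o = rdLab x v) := by
  obtain ⟨l, g, ⟨_, hmem, _, hkeep, _⟩, hsrw⟩ := hwit o
  have hol : o ∈ l := (hmem o).2 (Or.inr rfl)
  have hg : g o = h.lab o := hkeep o hol rfl
  have : g o ∈ l.map g := List.mem_map_of_mem (f := g) hol
  rw [hg] at this
  exact srw_mem_form hsrw _ this

lemma rf_subset {O X : Type} (h : History O RWM (RWD X))
    (hdiff : Differentiated h)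
    (co : O → O → Prop)
    (hwit : ∀ o, Linearizable (CausalPast co o) co {o} h.lab {ρ | SRW ρ}) :
    ∀ a b, RF h a b → co a b := by
  intro a b ⟨x, d, hwa, hrb⟩
  have hd0 : d ≠ 0 := fun hd => hdiff.2 a x (by rw [hwa, hd])
  obtain ⟨l, g, ⟨_, hmem, _, hkeep, hma⟩, hsrw⟩ := hwit b
  have hbl : b ∈ l := (hmem b).2 (Or.inr rfl)
  have hgb : g b = rdLab x d := by rw [hkeep b hbl rfl, hrb]
  have hrd : rdLab x d ∈ l.map g := by
    rw [← hgb]; exact List.mem_map_of_mem (f := g) hbl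
  have hwr : wrLab x d ∈ l.map g := srw_read_has_write hsrw x d hrd hd0
  obtain ⟨w', hw'l, hgw'⟩ := List.mem_map.1 hwr
  -- the label of w' has write form
  have hform := lab_form h co hwit w'
  have hma' := hma w' hw'l
  rw [hgw'] at hma'
  have hlabw' : h.lab w' = wrLab x d := by
    rcases hform with ⟨x', v', hwf⟩ | ⟨x', v', hrf⟩
    · rw [hwf] at hma' ⊢
      simp only [wrLab, Prod.mk.injEq, RWD.pair.injEq, true_and, and_true] at hma' ⊢
      exact ⟨hma'.1.symm, hma'.2.symm⟩
    · rw [hrf] at hma'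
      simp [wrLab, rdLab] at hma'
  have hw'a : w' = a := hdiff.1 w' a x d hlabw' hwa
  have hw'cp : w' ∈ CausalPast co b := (hmem w').1 hw'l
  rcases hw'cp with hc | hc
  · rwa [hw'a] at hc
  · rw [hc] at hlabw'
    rw [hlabw'] at hrb
    exact absurd hrb (by simp [wrLab, rdLab])

theorem co_contains_co {O X : Type} (h : History O RWM (RWD X))
    (hdiff : Differentiated h)
    (co : O → O → Prop) (hspo : IsSPO co)
    (hpo : ∀ a b, h.po a b → co a b)
    (hwit : ∀ o, Linearizable (CausalPast co o) co {o} h.lab {ρ | SRW ρ}) :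
    ∀ a b, CO h a b → co a b := by
  intro a b hab
  induction hab with
  | single hr =>
    rcases hr with hp | hr
    · exact hpo _ _ hp
    · exact rf_subset h hdiff co hwit _ _ hr
  | tail _ hr ih =>
    rcases hr with hp | hr
    · exact hspo.2 _ _ _ ih (hpo _ _ hp)
    · exact hspo.2 _ _ _ ih (rf_subset h hdiff co hwit _ _ hr)

/-- If a differentiated history is CC w.r.t. `S_RW` witnessed by a causal
order `co`, then `CO = (PO ∪ RF)⁺ ⊆ co`; in particular `CO` is acyclic. -/
theorem co_subset_of_cc_witness {O X : Type} (h : History O RWM (RWD X))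
    (hdiff : Differentiated h)
    (co : O → O → Prop) (hspo : IsSPO co)
    (hpo : ∀ a b, h.po a b → co a b)
    (hwit : ∀ o, Linearizable (CausalPast co o) co {o} h.lab {ρ | SRW ρ}) :
    (∀ a b, CO h a b → co a b) ∧ (∀ a, ¬ CO h a a) := by
  have hsub := co_contains_co h hdiff co hspo hpo hwit
  exact ⟨hsub, fun a haa => hspo.1 a (hsub a a haa)⟩
end

section
/- A differentiated history h is causally convergent (CCv) with respect to S_RW if and only if h is causally consistent (CC) with respect to S_RW and the relation CF ∪ CO is acyclic (i.e., h does not contain bad pattern CyclicCF). -/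
/-- the conflict relation `CF`: `w₁ <_CF w₂` iff `w₁, w₂` write distinct
values `d₁ ≠ d₂` on the same variable `x` and `w₁ <_CO r₂` for some read
`r₂ = rd(x) ▷ d₂`. -/
def CF {O X : Type} (h : History O RWM (RWD X)) (w₁ w₂ : O) : Prop :=
  ∃ (x : X) (d₁ d₂ : ℕ) (r₂ : O), d₁ ≠ d₂ ∧
    h.lab w₁ = wrLab x d₁ ∧ h.lab w₂ = wrLab x d₂ ∧
    h.lab r₂ = rdLab x d₂ ∧ CO h w₁ r₂

/-- bad pattern CyclicCF: a cycle in `CF ∪ CO`. -/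
def CyclicCF {O X : Type} (h : History O RWM (RWD X)) : Prop :=
  ∃ o, Relation.TransGen (fun a b => CF h a b ∨ CO h a b) o o

section AuxRW
variable {X : Type}

lemma wrLab_inj {x x' : X} {v v' : ℕ} (h : wrLab x v = wrLab x' v') : x = x' ∧ v = v' := by
  simpa [wrLab] using h

lemma rdLab_inj {x x' : X} {v v' : ℕ} (h : rdLab x v = rdLab x' v') : x = x' ∧ v = v' := by
  simpa [rdLab] using h

lemma wrLab_ne_rdLab {x x' : X} {v v' : ℕ} : wrLab x v ≠ rdLab x' v' := by
  simp [wrLab, rdLab]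

lemma srw_mem_forms {ρ : List (RWM × RWD X × RWD X)} (hs : SRW ρ) :
    ∀ a ∈ ρ, (∃ x v, a = wrLab x v) ∨ (∃ x v, a = rdLab x v) := by
  induction hs with
  | nil => simp
  | wr ρ x v _ ih =>
    intro a ha
    rcases List.mem_append.mp ha with h | h
    · exact ih a h
    · exact Or.inl ⟨x, v, by simpa using h⟩
  | rd0 ρ x _ _ ih =>
    intro a ha
    rcases List.mem_append.mp ha with h | h
    · exact ih a h
    · exact Or.inr ⟨x, 0, by simpa using h⟩
  | rd ρ₁ ρ₂ x v _ _ ih =>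
    intro a ha
    simp only [List.append_assoc, List.mem_append, List.mem_singleton] at ha
    rcases ha with h | h | h | h
    · exact ih a (by simp [h])
    · exact Or.inl ⟨x, v, h⟩
    · exact ih a (by simp [h])
    · exact Or.inr ⟨x, v, h⟩


lemma concat_cases {α : Type} {ρ σ τ : List α} {a r : α} (he : ρ ++ [a] = σ ++ r :: τ) :
    (ρ = σ ∧ a = r ∧ τ = []) ∨ ∃ τ', τ = τ' ++ [a] ∧ ρ = σ ++ r :: τ' := by
  rcases List.eq_nil_or_concat τ with rfl | ⟨τ', b, rfl⟩
  · obtain ⟨h1, h2⟩ := List.append_inj' he rfl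
    exact Or.inl ⟨h1, by simpa using h2, rfl⟩
  · rw [List.concat_eq_append] at he
    have he' : ρ ++ [a] = (σ ++ r :: τ') ++ [b] := by simpa using he
    obtain ⟨h1, h2⟩ := List.append_inj' he' rfl
    have hb : a = b := by simpa using h2
    subst hb
    exact Or.inr ⟨τ', List.concat_eq_append, h1⟩

lemma srw_read {ρ : List (RWM × RWD X × RWD X)} (hs : SRW ρ) :
    ∀ (σ τ : List (RWM × RWD X × RWD X)) (x : X) (v : ℕ), ρ = σ ++ rdLab x v :: τ →
      (∃ σ₁ σ₂, σ = σ₁ ++ wrLab x v :: σ₂ ∧ ∀ u ∈ σ₂, ¬ isWrLabOn x u) ∨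
      (v = 0 ∧ ∀ u ∈ σ, ¬ isWrLabOn x u) := by
  induction hs with
  | nil =>
    intro σ τ x v he
    exfalso
    have := congrArg List.length he
    simp at this
  | wr ρ y w hρ ih =>
    intro σ τ x v he
    rcases concat_cases he with ⟨h1, h2, h3⟩ | ⟨τ', hτ, h1⟩
    · exact absurd h2 wrLab_ne_rdLab
    · exact ih σ τ' x v h1
  | rd0 ρ y hρ hnw ih =>
    intro σ τ x v he
    rcases concat_cases he with ⟨h1, h2, h3⟩ | ⟨τ', hτ, h1⟩
    · obtain ⟨hx, hv⟩ := rdLab_inj h2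
      subst hx h1
      exact Or.inr ⟨hv.symm, hnw⟩
    · exact ih σ τ' x v h1
  | rd ρ₁ ρ₂ y w hρ hnw ih =>
    intro σ τ x v he
    have he' : (ρ₁ ++ [wrLab y w] ++ ρ₂) ++ [rdLab y w] = σ ++ rdLab x v :: τ := by
      simpa [List.append_assoc] using he
    rcases concat_cases he' with ⟨h1, h2, h3⟩ | ⟨τ', hτ, h1⟩
    · obtain ⟨hx, hv⟩ := rdLab_inj h2
      subst hx hv
      refine Or.inl ⟨ρ₁, ρ₂, ?_, hnw⟩
      rw [← h1]; simp
    · exact ih σ τ' x v h1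

open Classical in
noncomputable def firstVal (x : X) : List (RWM × RWD X × RWD X) → ℕ
  | [] => 0
  | a :: σ => if hh : ∃ v, a = wrLab x v then Classical.choose hh else firstVal x σ

lemma firstVal_cons_wr (x : X) (v : ℕ) (σ : List (RWM × RWD X × RWD X)) {a}
    (ha : a = wrLab x v) : firstVal x (a :: σ) = v := by
  have hh : ∃ v, a = wrLab x v := ⟨v, ha⟩
  rw [firstVal, dif_pos hh]
  have h2 : wrLab x v = wrLab x (Classical.choose hh) := ha.symm.trans (Classical.choose_spec hh)
  exact ((wrLab_inj h2).2).symm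

lemma firstVal_cons_nw (x : X) (σ : List (RWM × RWD X × RWD X)) {a}
    (ha : ¬ isWrLabOn x a) : firstVal x (a :: σ) = firstVal x σ := by
  rw [firstVal]
  exact dif_neg ha

lemma firstVal_eq_of (x : X) (v : ℕ) :
    ∀ (π ω : List (RWM × RWD X × RWD X)), (∀ u ∈ π, ¬ isWrLabOn x u) →
      firstVal x (π ++ wrLab x v :: ω) = v := by
  intro π
  induction π with
  | nil => intro ω _; exact firstVal_cons_wr x v ω rfl
  | cons a π' ihp =>
    intro ω hnw
    rw [List.cons_append, firstVal_cons_nw x _ (hnw a (by simp))]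
    exact ihp ω (fun u hu => hnw u (by simp [hu]))

lemma firstVal_eq_zero (x : X) :
    ∀ (σ : List (RWM × RWD X × RWD X)), (∀ u ∈ σ, ¬ isWrLabOn x u) → firstVal x σ = 0 := by
  intro σ
  induction σ with
  | nil => intro; rfl
  | cons a σ' ihp =>
    intro hnw
    rw [firstVal_cons_nw x _ (hnw a (by simp))]
    exact ihp (fun u hu => hnw u (by simp [hu]))

noncomputable def lastVal (x : X) (σ : List (RWM × RWD X × RWD X)) : ℕ :=
  firstVal x σ.reverse

lemma lastVal_eq_of {x : X} {v : ℕ} {σ : List (RWM × RWD X × RWD X)}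
    (σ₁ σ₂ : List (RWM × RWD X × RWD X)) (he : σ = σ₁ ++ wrLab x v :: σ₂)
    (hnw : ∀ u ∈ σ₂, ¬ isWrLabOn x u) : lastVal x σ = v := by
  subst he
  rw [lastVal]
  have : (σ₁ ++ wrLab x v :: σ₂).reverse = σ₂.reverse ++ wrLab x v :: σ₁.reverse := by
    simp
  rw [this]
  exact firstVal_eq_of x v _ _ (fun u hu => hnw u (List.mem_reverse.mp hu))

lemma lastVal_eq_zero {x : X} {σ : List (RWM × RWD X × RWD X)}
    (hnw : ∀ u ∈ σ, ¬ isWrLabOn x u) : lastVal x σ = 0 :=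
  firstVal_eq_zero x _ (fun u hu => hnw u (List.mem_reverse.mp hu))

lemma lastVal_cases (x : X) (σ : List (RWM × RWD X × RWD X)) :
    (∃ σ₁ v σ₂, σ = σ₁ ++ wrLab x v :: σ₂ ∧ (∀ u ∈ σ₂, ¬ isWrLabOn x u) ∧ lastVal x σ = v) ∨
    ((∀ u ∈ σ, ¬ isWrLabOn x u) ∧ lastVal x σ = 0) := by
  induction σ using List.reverseRecOn with
  | nil => exact Or.inr ⟨by simp, lastVal_eq_zero (by simp)⟩
  | append_singleton σ a ih =>
    by_cases ha : isWrLabOn x a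
    · obtain ⟨v, rfl⟩ := ha
      exact Or.inl ⟨σ, v, [], by simp, by simp, lastVal_eq_of σ [] (by simp) (by simp)⟩
    · rcases ih with ⟨σ₁, v, σ₂, he, hnw, _⟩ | ⟨hnw, _⟩
      · refine Or.inl ⟨σ₁, v, σ₂ ++ [a], by rw [he]; simp, ?_, ?_⟩
        · intro u hu
          rcases List.mem_append.mp hu with h | h
          · exact hnw u h
          · rw [List.mem_singleton.mp h]; exact ha
        · exact lastVal_eq_of σ₁ (σ₂ ++ [a]) (by rw [he]; simp) (by
            intro u hu
            rcases List.mem_append.mp hu with h | h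
            · exact hnw u h
            · rw [List.mem_singleton.mp h]; exact ha)
      · refine Or.inr ⟨?_, lastVal_eq_zero ?_⟩ <;>
        · intro u hu
          rcases List.mem_append.mp hu with h | h
          · exact hnw u h
          · rw [List.mem_singleton.mp h]; exact ha

lemma firstVal_congr (x : X) {σ σ' : List (RWM × RWD X × RWD X)}
    (hf : List.Forall₂ (fun a b => ∀ v, a = wrLab x v ↔ b = wrLab x v) σ σ') :
    firstVal x σ = firstVal x σ' := by
  induction hf with
  | nil => rfl
  | @cons a b σ₀ σ₀' hab _ ih =>
    by_cases hh : ∃ v, a = wrLab x v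
    · obtain ⟨v, hv⟩ := hh
      rw [firstVal_cons_wr x v _ hv, firstVal_cons_wr x v _ ((hab v).mp hv)]
    · have hh' : ¬ ∃ v, b = wrLab x v := fun ⟨v, hv⟩ => hh ⟨v, (hab v).mpr hv⟩
      rw [firstVal_cons_nw x _ hh, firstVal_cons_nw x _ hh', ih]

lemma lastVal_map_congr {O : Type} (x : X) (f g : O → RWM × RWD X × RWD X) (p : List O)
    (hfg : ∀ u ∈ p, ∀ v, f u = wrLab x v ↔ g u = wrLab x v) :
    lastVal x (p.map f) = lastVal x (p.map g) := by
  rw [lastVal, lastVal, ← List.map_reverse, ← List.map_reverse]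
  apply firstVal_congr
  have : ∀ q : List O, (∀ u ∈ q, ∀ v, f u = wrLab x v ↔ g u = wrLab x v) →
      List.Forall₂ (fun a b => ∀ v, a = wrLab x v ↔ b = wrLab x v) (q.map f) (q.map g) := by
    intro q
    induction q with
    | nil => intro; simp
    | cons a q' ihq =>
      intro hq
      simp only [List.map_cons]
      exact List.Forall₂.cons (hq a (by simp)) (ihq (fun u hu v => hq u (by simp [hu]) v))
  exact this p.reverse (fun u hu v => hfg u (List.mem_reverse.mp hu) v)

lemma srw_of : ∀ (ρ : List (RWM × RWD X × RWD X)),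
    (∀ ρ₁ a ρ₂, ρ = ρ₁ ++ a :: ρ₂ →
      (∃ x v, a = wrLab x v) ∨ (∃ x, a = rdLab x (lastVal x ρ₁))) → SRW ρ := by
  intro ρ
  induction ρ using List.reverseRecOn with
  | nil => intro _; exact SRW.nil
  | append_singleton σ a ih =>
    intro hyp
    have hσ : SRW σ := ih (fun ρ₁ b ρ₂ he => hyp ρ₁ b (ρ₂ ++ [a]) (by rw [he]; simp))
    rcases hyp σ a [] rfl with ⟨x, v, rfl⟩ | ⟨x, rfl⟩
    · exact SRW.wr σ x v hσ
    · rcases lastVal_cases x σ with ⟨σ₁, v, σ₂, he, hnw, hlv⟩ | ⟨hnw, hlv⟩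
      · rw [hlv, he]
        have := SRW.rd σ₁ σ₂ x v (by
          have e : σ₁ ++ [wrLab x v] ++ σ₂ = σ := by rw [he]; simp
          rw [e]; exact hσ) hnw
        simpa [List.append_assoc] using this
      · rw [hlv]
        exact SRW.rd0 σ x hσ hnw

end AuxRW

section AuxList
variable {α : Type} {β : Type}

lemma aux_map_split (g : α → β) : ∀ (l : List α) (σ₁ σ₂ : List β) (e : β),
    l.map g = σ₁ ++ e :: σ₂ →
    ∃ p u q, l = p ++ u :: q ∧ p.map g = σ₁ ∧ g u = e ∧ q.map g = σ₂ := by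
  intro l
  induction l with
  | nil =>
    intro σ₁ σ₂ e H
    exfalso
    have := congrArg List.length H
    simp at this
  | cons a t ih =>
    intro σ₁ σ₂ e H
    cases σ₁ with
    | nil =>
      simp only [List.map_cons, List.nil_append, List.cons.injEq] at H
      exact ⟨[], a, t, by simp, by simp, H.1, H.2⟩
    | cons b σ₁' =>
      simp only [List.map_cons, List.cons_append, List.cons.injEq] at H
      obtain ⟨p, u, q, h1, h2, h3, h4⟩ := ih σ₁' σ₂ e H.2
      exact ⟨a :: p, u, q, by rw [h1]; simp, by simp [H.1, h2], h3, h4⟩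

lemma aux_before_or : ∀ (l : List α) (a b : α), a ∈ l → b ∈ l → a ≠ b →
    (∃ p q s, l = p ++ a :: (q ++ b :: s)) ∨ (∃ p q s, l = p ++ b :: (q ++ a :: s)) := by
  intro l
  induction l with
  | nil => simp
  | cons c t ih =>
    intro a b ha hb hne
    rcases eq_or_ne c a with rfl | hca
    · have hbt : b ∈ t := by
        rcases List.mem_cons.mp hb with rfl | hb'
        · exact absurd rfl hne.symm
        · exact hb'
      obtain ⟨s, t', rfl⟩ := List.append_of_mem hbt
      exact Or.inl ⟨[], s, t', by simp⟩
    · rcases eq_or_ne c b with rfl | hcb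
      · have hat : a ∈ t := by
          rcases List.mem_cons.mp ha with rfl | ha'
          · exact absurd rfl hne
          · exact ha'
        obtain ⟨s, t', rfl⟩ := List.append_of_mem hat
        exact Or.inr ⟨[], s, t', by simp⟩
      · have hat : a ∈ t := by
          rcases List.mem_cons.mp ha with rfl | ha'
          · exact absurd rfl hca.symm
          · exact ha'
        have hbt : b ∈ t := by
          rcases List.mem_cons.mp hb with rfl | hb'
          · exact absurd rfl hcb.symm
          · exact hb'
        rcases ih a b hat hbt hne with ⟨p, q, s, rfl⟩ | ⟨p, q, s, rfl⟩
        · exact Or.inl ⟨c :: p, q, s, by simp⟩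
        · exact Or.inr ⟨c :: p, q, s, by simp⟩

lemma aux_nodup_mid {p q : List α} {a : α} (hnd : (p ++ a :: q).Nodup) :
    a ∉ p ∧ a ∉ q := by
  rw [List.nodup_append] at hnd
  exact ⟨fun hp => hnd.2.2 a hp a List.mem_cons_self rfl,
    (List.nodup_cons.mp hnd.2.1).1⟩

lemma aux_pairwise_split {R : α → α → Prop} {l p q s : List α} {a b : α}
    (hp : l.Pairwise R) (he : l = p ++ a :: (q ++ b :: s)) : R a b := by
  subst he
  have h1 : List.Sublist [a, b] (a :: (q ++ b :: s)) := by
    refine List.Sublist.cons₂ a ?_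
    have h0 : List.Sublist [b] (b :: s) := List.Sublist.cons₂ b (List.nil_sublist s)
    exact h0.trans (List.sublist_append_right q (b :: s))
  have h2 : List.Sublist [a, b] (p ++ a :: (q ++ b :: s)) :=
    h1.trans (List.sublist_append_right p _)
  have := hp.sublist h2
  exact (List.pairwise_cons.mp this).1 b (List.mem_singleton.mpr rfl)

lemma aux_finCond_of_pairwise {r : α → α → Prop} {l : List α} (hirr : ∀ a, ¬ r a a)
    (hp : l.Pairwise (fun a b => ¬ r b a)) :
    ∀ i j : Fin l.length, r (l.get i) (l.get j) → (i : ℕ) < (j : ℕ) := by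
  intro i j hr
  rcases lt_trichotomy (i : ℕ) (j : ℕ) with hlt | heq | hgt
  · exact hlt
  · exfalso; have : i = j := Fin.ext heq
    subst this; exact hirr _ hr
  · exfalso
    exact (List.pairwise_iff_get.mp hp j i hgt) hr

lemma aux_pairwise_of_finCond {r : α → α → Prop} {l : List α}
    (hc : ∀ i j : Fin l.length, r (l.get i) (l.get j) → (i : ℕ) < (j : ℕ)) :
    l.Pairwise (fun a b => ¬ r b a) := by
  refine List.pairwise_iff_get.mpr ?_
  intro i j hij hr
  have := hc j i hr
  omega

open Classical in
noncomputable def prefixUpTo (o' : α) : List α → List α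
  | [] => []
  | a :: t => if a = o' then [] else a :: prefixUpTo o' t

lemma prefixUpTo_eq (o' : α) : ∀ (p q : List α), o' ∉ p →
    prefixUpTo o' (p ++ o' :: q) = p := by
  intro p
  induction p with
  | nil => intro q _; simp [prefixUpTo]
  | cons a p' ih =>
    intro q hnp
    have ha : a ≠ o' := fun e => hnp (by simp [e])
    rw [List.cons_append, prefixUpTo, if_neg ha, ih q (fun hm => hnp (by simp [hm]))]

end AuxList


section MainAux
variable {O X : Type} (h : History O RWM (RWD X))

lemma lab_form_of_wit {co rr : O → O → Prop}
    (wall : ∀ o, Linearizable (CausalPast co o) rr {o} h.lab {ρ | SRW ρ}) (o : O) :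
    (∃ x v, h.lab o = wrLab x v) ∨ (∃ x v, h.lab o = rdLab x v) := by
  obtain ⟨l, g, ⟨hnd, hmem, hord, hkeep, hma⟩, hS⟩ := wall o
  have ho : o ∈ l := (hmem o).mpr (Or.inr rfl)
  have hgo : g o = h.lab o := hkeep o ho rfl
  have := srw_mem_forms hS (g o) (List.mem_map_of_mem (f := g) ho)
  rw [hgo] at this
  exact this

lemma glab_wr_iff {g : O → RWM × RWD X × RWD X} {l : List O}
    (hcl : ∀ u, (∃ x v, h.lab u = wrLab x v) ∨ (∃ x v, h.lab u = rdLab x v))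
    (hma : ∀ u ∈ l, (g u).1 = (h.lab u).1 ∧ (g u).2.1 = (h.lab u).2.1)
    (hS : SRW (l.map g)) {u : O} (hu : u ∈ l) (x : X) (d : ℕ) :
    g u = wrLab x d ↔ h.lab u = wrLab x d := by
  obtain ⟨h1, h2⟩ := hma u hu
  constructor
  · intro hg
    rcases hcl u with ⟨x', v', hl⟩ | ⟨x', v', hl⟩
    · rw [hg] at h1 h2
      rw [hl] at h1 h2 ⊢
      simp [wrLab] at h2 ⊢
      exact ⟨h2.1.symm, h2.2.symm⟩
    · rw [hg, hl] at h1
      simp [wrLab, rdLab] at h1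
  · intro hl
    rcases srw_mem_forms hS (g u) (List.mem_map_of_mem (f := g) hu) with ⟨x', v', hg⟩ | ⟨x', v', hg⟩
    · rw [hg] at h2 ⊢
      rw [hl] at h2
      simp [wrLab] at h2 ⊢
      exact h2
    · rw [hg, hl] at h1
      simp [wrLab, rdLab] at h1

lemma rf_sub_co {co rr : O → O → Prop} (hdiff : Differentiated h)
    (wall : ∀ o, Linearizable (CausalPast co o) rr {o} h.lab {ρ | SRW ρ}) :
    ∀ {w r : O}, RF h w r → co w r := by
  intro w r hrf
  obtain ⟨x, d, hw, hr⟩ := hrf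
  have hcl := lab_form_of_wit h wall
  have hd0 : d ≠ 0 := fun hd => hdiff.2 w x (by rw [hw, hd])
  obtain ⟨l, g, ⟨hnd, hmem, hord, hkeep, hma⟩, hS⟩ := wall r
  have hrl : r ∈ l := (hmem r).mpr (Or.inr rfl)
  obtain ⟨s, t, hlst⟩ := List.append_of_mem hrl
  have hgr : g r = h.lab r := hkeep r hrl rfl
  have hmap : l.map g = s.map g ++ rdLab x d :: t.map g := by
    rw [hlst]; simp [hgr, hr]
  rcases srw_read hS _ _ x d hmap with ⟨σ₁, σ₂, hseq, hnw⟩ | ⟨hd, _⟩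
  · obtain ⟨p, w', q, hsplit, hp1, hgw', hq⟩ := aux_map_split g s σ₁ σ₂ _ hseq
    have hw'l : w' ∈ l := by rw [hlst, hsplit]; simp
    have hlabw' : h.lab w' = wrLab x d := (glab_wr_iff h hcl hma hS hw'l x d).mp hgw'
    have hww : w' = w := hdiff.1 w' w x d hlabw' hw
    rcases (hmem w').mp hw'l with hco | hco
    · exact hww ▸ hco
    · exfalso
      rw [hco] at hlabw'
      exact wrLab_ne_rdLab (hlabw'.symm.trans hr)
  · exact absurd hd hd0

lemma CO_sub_co {co rr : O → O → Prop} (hdiff : Differentiated h)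
    (wall : ∀ o, Linearizable (CausalPast co o) rr {o} h.lab {ρ | SRW ρ})
    (hspo : IsSPO co) (hpo : ∀ a b, h.po a b → co a b) :
    ∀ {a b : O}, CO h a b → co a b := by
  intro a b hab
  induction hab with
  | single hx =>
    rcases hx with hpoab | hrf
    · exact hpo _ _ hpoab
    · exact rf_sub_co h hdiff wall hrf
  | tail _ hx ih =>
    rcases hx with hpoab | hrf
    · exact hspo.2 _ _ _ ih (hpo _ _ hpoab)
    · exact hspo.2 _ _ _ ih (rf_sub_co h hdiff wall hrf)

end MainAux

/-- A differentiated history is CCv w.r.t. `S_RW` iff it is CC w.r.t. `S_RW`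
and does not contain bad pattern CyclicCF. -/
theorem ccv_iff_cc_and_no_cyclicCF {O X : Type} (h : History O RWM (RWD X))
    (hdiff : Differentiated h) :
    CCv h {ρ | SRW ρ} ↔ CC h {ρ | SRW ρ} ∧ ¬ CyclicCF h := by
  constructor
  · rintro ⟨co, arb, hco, hpoco, harb, hcoarb, wall⟩
    have hCOco : ∀ {a b : O}, CO h a b → co a b :=
      fun {a b} hab => CO_sub_co h hdiff wall hco hpoco hab
    have hcl := lab_form_of_wit h wall
    refine ⟨⟨co, hco, hpoco, fun o => ?_⟩, ?_⟩
    · obtain ⟨l, g, ⟨a1, a2, a3, a4, a5⟩, hS⟩ := wall o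
      exact ⟨l, g, ⟨a1, a2, fun i j hr => a3 i j (hcoarb _ _ hr), a4, a5⟩, hS⟩
    · rintro ⟨o, hcyc⟩
      -- CF ⊆ arb
      have hCF : ∀ a b : O, CF h a b → arb a b := by
        intro w₁ w₂ hcf
        obtain ⟨x, d₁, d₂, r₂, hne, hw₁, hw₂, hr₂, hCOr⟩ := hcf
        have hd₂0 : d₂ ≠ 0 := fun e => hdiff.2 w₂ x (by rw [hw₂, e])
        obtain ⟨l, g, ⟨hnd, hmem, hord, hkeep, hma⟩, hS⟩ := wall r₂
        have hrl : r₂ ∈ l := (hmem r₂).mpr (Or.inr rfl)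
        obtain ⟨s, t, hlst⟩ := List.append_of_mem hrl
        have hgr : g r₂ = h.lab r₂ := hkeep r₂ hrl rfl
        have hmap : l.map g = s.map g ++ rdLab x d₂ :: t.map g := by
          rw [hlst]; simp [hgr, hr₂]
        rcases srw_read hS _ _ x d₂ hmap with ⟨σ₁, σ₂, hseq, hnw⟩ | ⟨hd, _⟩
        swap
        · exact absurd hd hd₂0
        obtain ⟨p, w', q, hsplit, hp1, hgw', hq⟩ := aux_map_split g s σ₁ σ₂ _ hseq
        have hw'l : w' ∈ l := by rw [hlst, hsplit]; simp
        have hlabw' : h.lab w' = wrLab x d₂ := (glab_wr_iff h hcl hma hS hw'l x d₂).mp hgw'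
        have hww : w₂ = w' := (hdiff.1 w' w₂ x d₂ hlabw' hw₂).symm
        subst hww
        have hpw : l.Pairwise (fun a b => ¬ arb b a) := aux_pairwise_of_finCond hord
        have hco₁ : co w₁ r₂ := hCOco hCOr
        have hw₁arbr : arb w₁ r₂ := hcoarb _ _ hco₁
        have hw₁l : w₁ ∈ l := (hmem w₁).mpr (Or.inl hco₁)
        have hw₁w₂ : w₁ ≠ w₂ := by
          intro e
          rw [e, hw₂] at hw₁
          exact hne ((wrLab_inj hw₁).2).symm
        have hw₁r₂ : w₁ ≠ r₂ := by
          intro e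
          rw [e, hr₂] at hw₁
          exact wrLab_ne_rdLab hw₁.symm
        have hl2 : l = p ++ w₂ :: (q ++ r₂ :: t) := by rw [hlst, hsplit]; simp
        rw [hl2] at hw₁l
        rcases List.mem_append.mp hw₁l with hp' | hrest
        · obtain ⟨p₁, p₂, hpp⟩ := List.append_of_mem hp'
          have hnarb : ¬ arb w₂ w₁ :=
            aux_pairwise_split hpw (show l = p₁ ++ w₁ :: (p₂ ++ w₂ :: (q ++ r₂ :: t)) by
              rw [hl2, hpp]; simp)
          rcases harb.2 w₁ w₂ hw₁w₂ with h' | h'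
          · exact h'
          · exact absurd h' hnarb
        · rcases List.mem_cons.mp hrest with e | hqt
          · exact absurd e hw₁w₂
          rcases List.mem_append.mp hqt with hq' | hrt
          · exfalso
            have hgw₁ : g w₁ = wrLab x d₁ :=
              (glab_wr_iff h hcl hma hS (by rw [hl2]; simp [hq']) x d₁).mpr hw₁
            exact hnw (g w₁) (by rw [← hq]; exact List.mem_map_of_mem (f := g) hq') ⟨d₁, hgw₁⟩
          · rcases List.mem_cons.mp hrt with e | ht
            · exact absurd e hw₁r₂
            · exfalso
              obtain ⟨t₁, t₂, htt⟩ := List.append_of_mem ht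
              have hnarb : ¬ arb w₁ r₂ :=
                aux_pairwise_split hpw (show l = (p ++ w₂ :: q) ++ r₂ :: (t₁ ++ w₁ :: t₂) by
                  rw [hl2, htt]; simp)
              exact absurd hw₁arbr hnarb
      -- cycle contradiction
      have hsub : ∀ {a b : O}, Relation.TransGen (fun a b => CF h a b ∨ CO h a b) a b → arb a b := by
        intro a b hab
        induction hab with
        | single hx =>
          rcases hx with hcf | hco'
          · exact hCF _ _ hcf
          · exact hcoarb _ _ (hCOco hco')
        | tail _ hx ih =>
          rcases hx with hcf | hco'
          · exact harb.1.2 _ _ _ ih (hCF _ _ hcf)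
          · exact harb.1.2 _ _ _ ih (hcoarb _ _ (hCOco hco'))
      exact harb.1.1 o (hsub hcyc)
  · rintro ⟨⟨co, hco, hpoco, wall⟩, hacyc⟩
    classical
    have hcl := lab_form_of_wit h wall
    have hCOco : ∀ {a b : O}, CO h a b → co a b :=
      fun {a b} hab => CO_sub_co h hdiff wall hco hpoco hab
    have hRtirr : ∀ o : O, ¬ Relation.TransGen (fun a b => CF h a b ∨ CO h a b) o o :=
      fun o hc => hacyc ⟨o, hc⟩
    let r' : O → O → Prop :=
      fun a b => Relation.TransGen (fun a b => CF h a b ∨ CO h a b) a b ∨ a = b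
    haveI hr'po : IsPartialOrder O r' := by
      refine { refl := fun a => Or.inr rfl, trans := ?_, antisymm := ?_ }
      · intro a b c h1 h2
        rcases h1 with hab | e1
        · rcases h2 with hbc | e2
          · exact Or.inl (hab.trans hbc)
          · exact e2 ▸ Or.inl hab
        · exact e1 ▸ h2
      · intro a b h1 h2
        rcases h1 with hab | e1
        · rcases h2 with hba | e2
          · exact absurd (hab.trans hba) (hRtirr a)
          · exact e2.symm
        · exact e1
    obtain ⟨sx, hsx, hsub⟩ := extend_partialOrder r'
    haveI := hsx
    let arb : O → O → Prop := fun a b => sx a b ∧ a ≠ b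
    have harb_irr : ∀ a, ¬ arb a a := fun a ha => ha.2 rfl
    have harb_trans : ∀ a b c, arb a b → arb b c → arb a c := by
      intro a b c h1 h2
      refine ⟨_root_.trans h1.1 h2.1, ?_⟩
      intro e
      exact h1.2 (antisymm h1.1 (e ▸ h2.1))
    have harb_total : ∀ a b : O, a ≠ b → arb a b ∨ arb b a := by
      intro a b hne
      rcases total_of sx a b with hs | hs
      · exact Or.inl ⟨hs, hne⟩
      · exact Or.inr ⟨hs, hne.symm⟩
    have hRarb : ∀ {a b : O},
        Relation.TransGen (fun a b => CF h a b ∨ CO h a b) a b → arb a b := by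
      intro a b hab
      refine ⟨hsub a b (Or.inl hab), ?_⟩
      intro e
      exact hRtirr a (e ▸ hab)
    have hCOarb : ∀ {a b : O}, CO h a b → arb a b :=
      fun hab => hRarb (Relation.TransGen.single (Or.inr hab))
    have hCFarb : ∀ {a b : O}, CF h a b → arb a b :=
      fun hab => hRarb (Relation.TransGen.single (Or.inl hab))
    refine ⟨CO h, arb,
      ⟨fun a ha => hRtirr a (Relation.TransGen.single (Or.inr ha)),
        fun a b c hab hbc => hab.trans hbc⟩,
      fun a b hp => Relation.TransGen.single (Or.inl hp),
      ⟨⟨harb_irr, harb_trans⟩, harb_total⟩,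
      fun a b hab => hCOarb hab, ?_⟩
    intro o
    obtain ⟨l₀, g₀, ⟨hnd₀, hmem₀, hord₀, hkeep₀, hma₀⟩, hS₀⟩ := wall o
    have hgo₀ : g₀ o = h.lab o := hkeep₀ o ((hmem₀ o).mpr (Or.inr rfl)) rfl
    have hpw₀ : l₀.Pairwise (fun a b => ¬ co b a) := aux_pairwise_of_finCond hord₀
    let l₁ : List O := l₀.filter (fun u => decide (u ∈ CausalPast (CO h) o))
    let rr : O → O → Prop := fun a b => ¬ arb b a
    haveI : DecidableRel rr := fun a b => Classical.propDecidable _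
    haveI hto : IsTotal O rr := by
      refine ⟨?_⟩
      intro a b
      by_contra hcon
      push_neg at hcon
      exact harb_irr a (harb_trans a b a (not_not.mp hcon.2) (not_not.mp hcon.1))
    haveI htr : IsTrans O rr := by
      refine ⟨?_⟩
      intro a b c hab hbc hca
      rcases eq_or_ne b c with e | hbc'
      · exact hab (e ▸ hca)
      · rcases eq_or_ne b a with e | hba'
        · exact hbc (e ▸ hca)
        · rcases harb_total b c hbc' with hbc2 | hcb2
          · exact hab (harb_trans b c a hbc2 hca)
          · exact hbc hcb2
    let l : List O := l₁.insertionSort rr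
    have hperm : l.Perm l₁ := List.perm_insertionSort rr l₁
    have hndl : l.Nodup := (hperm.nodup_iff).mpr (hnd₀.filter _)
    have hmeml : ∀ u, u ∈ l ↔ u ∈ CausalPast (CO h) o := by
      intro u
      rw [hperm.mem_iff, List.mem_filter]
      constructor
      · rintro ⟨_, hd⟩
        exact of_decide_eq_true hd
      · intro hu
        refine ⟨?_, decide_eq_true hu⟩
        rcases hu with h1 | h2
        · exact (hmem₀ u).mpr (Or.inl (hCOco h1))
        · exact (hmem₀ u).mpr (Or.inr h2)
    have hsort : l.Pairwise rr := List.pairwise_insertionSort (r := rr) l₁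
    have homem : o ∈ l := (hmeml o).mpr (Or.inr rfl)
    let g : O → RWM × RWD X × RWD X := fun u =>
      if u = o then h.lab u
      else if hr : ∃ x v, h.lab u = rdLab x v then
        rdLab hr.choose (lastVal hr.choose ((prefixUpTo u l).map h.lab))
      else h.lab u
    have hg_o : g o = h.lab o := if_pos rfl
    have hg_rdform : ∀ u (x : X) (v : ℕ), u ≠ o → h.lab u = rdLab x v →
        g u = rdLab x (lastVal x ((prefixUpTo u l).map h.lab)) := by
      intro u x v hne hlab
      have hr : ∃ x v, h.lab u = rdLab x v := ⟨x, v, hlab⟩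
      obtain ⟨v', hv'⟩ := hr.choose_spec
      have hx : hr.choose = x := (rdLab_inj (hv'.symm.trans hlab)).1
      show (if u = o then h.lab u else if hr : ∃ x v, h.lab u = rdLab x v then
        rdLab hr.choose (lastVal hr.choose ((prefixUpTo u l).map h.lab))
      else h.lab u) = _
      rw [if_neg hne, dif_pos hr, hx]
    have hg_nr : ∀ u, ¬ (∃ x v, h.lab u = rdLab x v) → g u = h.lab u := by
      intro u hnr
      show (if u = o then h.lab u else if hr : ∃ x v, h.lab u = rdLab x v then
        rdLab hr.choose (lastVal hr.choose ((prefixUpTo u l).map h.lab))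
      else h.lab u) = _
      by_cases he : u = o
      · rw [if_pos he]
      · rw [if_neg he, dif_neg hnr]
    have hg_eq_o : ∀ u, u = o → g u = h.lab u := by
      intro u he
      show (if u = o then h.lab u else if hr : ∃ x v, h.lab u = rdLab x v then
        rdLab hr.choose (lastVal hr.choose ((prefixUpTo u l).map h.lab))
      else h.lab u) = _
      rw [if_pos he]
    have hg_wr : ∀ u (x : X) (d : ℕ), g u = wrLab x d ↔ h.lab u = wrLab x d := by
      intro u x d
      by_cases hrd : ∃ x' v', h.lab u = rdLab x' v'
      · obtain ⟨x', v', hlab⟩ := hrd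
        by_cases he : u = o
        · rw [hg_eq_o u he]
        · rw [hg_rdform u x' v' he hlab, hlab]
          constructor <;> intro hh <;> exact absurd hh.symm wrLab_ne_rdLab
      · rw [hg_nr u hrd]
    have hg_ma : ∀ u, (g u).1 = (h.lab u).1 ∧ (g u).2.1 = (h.lab u).2.1 := by
      intro u
      by_cases he : u = o
      · rw [hg_eq_o u he]; exact ⟨rfl, rfl⟩
      by_cases hrd : ∃ x' v', h.lab u = rdLab x' v'
      · obtain ⟨x', v', hlab⟩ := hrd
        rw [hg_rdform u x' v' he hlab, hlab]
        exact ⟨rfl, rfl⟩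
      · rw [hg_nr u hrd]; exact ⟨rfl, rfl⟩
    refine ⟨l, g, ⟨hndl, hmeml, aux_finCond_of_pairwise harb_irr hsort,
      fun u _ hu1 => hg_eq_o u hu1, fun u _ => hg_ma u⟩, ?_⟩
    show SRW (l.map g)
    apply srw_of
    intro ρ₁ a ρ₂ he
    obtain ⟨p, u, q, hl, hp, hgu, hq⟩ := aux_map_split g l ρ₁ ρ₂ a he
    have hup : u ∉ p := (aux_nodup_mid (hl ▸ hndl)).1
    have hpre : prefixUpTo u l = p := by rw [hl]; exact prefixUpTo_eq u p q hup
    have hcong : ∀ x : X, lastVal x (p.map h.lab) = lastVal x (p.map g) :=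
      fun x => lastVal_map_congr x h.lab g p (fun u' _ v => (hg_wr u' x v).symm)
    subst hgu
    rcases hcl u with ⟨x, v, hlab⟩ | ⟨x, v, hlab⟩
    · exact Or.inl ⟨x, v, (hg_wr u x v).mpr hlab⟩
    · right
      refine ⟨x, ?_⟩
      by_cases huo : u = o
      · subst huo
        rw [hg_o, hlab, ← hp]
        have honp : u ∉ p := hup
        by_cases hv0 : v = 0
        · subst hv0
          have hnwp : ∀ e ∈ p.map g, ¬ isWrLabOn x e := by
            intro e hme hwr
            obtain ⟨d'', hd''⟩ := hwr
            obtain ⟨u', hu'p, hgu'⟩ := List.mem_map.mp hme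
            have hlabu' : h.lab u' = wrLab x d'' := (hg_wr u' x d'').mp (hgu'.trans hd'')
            have hu'no : u' ≠ u := fun e' => honp (e' ▸ hu'p)
            have hu'l : u' ∈ l := by rw [hl]; simp [hu'p]
            have hCOu' : CO h u' u := by
              rcases (hmeml u').mp hu'l with h1 | h2
              · exact h1
              · exact absurd h2 hu'no
            have hcou' : co u' u := hCOco hCOu'
            have hu'l₀ : u' ∈ l₀ := (hmem₀ u').mpr (Or.inl hcou')
            have hol₀ : u ∈ l₀ := (hmem₀ u).mpr (Or.inr rfl)
            rcases aux_before_or l₀ u' u hu'l₀ hol₀ hu'no with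
              ⟨e₁, e₂, e₃, hsplit₀⟩ | ⟨e₁, e₂, e₃, hsplit₀⟩
            swap
            · exact absurd hcou' (aux_pairwise_split hpw₀ hsplit₀)
            have hmap₀ : l₀.map g₀ = (e₁ ++ u' :: e₂).map g₀ ++ rdLab x 0 :: e₃.map g₀ := by
              rw [hsplit₀]; simp [hgo₀, hlab]
            rcases srw_read hS₀ _ _ x 0 hmap₀ with ⟨σ₁', σ₂', hseq', hnw'⟩ | ⟨_, hnw'⟩
            · obtain ⟨p', w₀, q', hsp', hp', hgw₀, hq'⟩ := aux_map_split g₀ _ σ₁' σ₂' _ hseq'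
              have hw₀m : w₀ ∈ e₁ ++ u' :: e₂ := by rw [hsp']; simp
              have hw₀l : w₀ ∈ l₀ := by
                rw [hsplit₀]
                rcases List.mem_append.mp hw₀m with hh | hh
                · simp [hh]
                · rcases List.mem_cons.mp hh with e | hh'
                  · simp [e]
                  · simp [hh']
              have hlw₀ : h.lab w₀ = wrLab x 0 := (glab_wr_iff h hcl hma₀ hS₀ hw₀l x 0).mp hgw₀
              exact hdiff.2 w₀ x hlw₀
            · have hg₀u' : g₀ u' = wrLab x d'' :=
                (glab_wr_iff h hcl hma₀ hS₀ hu'l₀ x d'').mpr hlabu'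
              exact hnw' (g₀ u') (List.mem_map_of_mem (f := g₀) (by simp)) ⟨d'', hg₀u'⟩
          rw [lastVal_eq_zero hnwp]
        · have hol₀ : u ∈ l₀ := (hmem₀ u).mpr (Or.inr rfl)
          obtain ⟨s₀, t₀, hsplit₀⟩ := List.append_of_mem hol₀
          have hmap₀ : l₀.map g₀ = s₀.map g₀ ++ rdLab x v :: t₀.map g₀ := by
            rw [hsplit₀]; simp [hgo₀, hlab]
          rcases srw_read hS₀ _ _ x v hmap₀ with ⟨σ₁', σ₂', hseq', hnw'⟩ | ⟨hv0', _⟩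
          swap
          · exact absurd hv0' hv0
          obtain ⟨p', w, q', hsp', hp', hgw, hq'⟩ := aux_map_split g₀ _ σ₁' σ₂' _ hseq'
          have hwl₀ : w ∈ l₀ := by rw [hsplit₀, hsp']; simp
          have hlabw : h.lab w = wrLab x v := (glab_wr_iff h hcl hma₀ hS₀ hwl₀ x v).mp hgw
          have hrfw : RF h w u := ⟨x, v, hlabw, hlab⟩
          have hCOw : CO h w u := Relation.TransGen.single (Or.inr hrfw)
          have hwl : w ∈ l := (hmeml w).mpr (Or.inl hCOw)
          have hwo : w ≠ u := by
            intro e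
            have : wrLab x v = rdLab x v := by rw [← hlabw, e, hlab]
            exact wrLab_ne_rdLab this
          rw [hl] at hwl
          have hwp : w ∈ p := by
            rcases List.mem_append.mp hwl with hh | hh
            · exact hh
            · rcases List.mem_cons.mp hh with e | hh'
              · exact absurd e hwo
              · exfalso
                obtain ⟨q₁, q₂, hqq⟩ := List.append_of_mem hh'
                have hno : ¬ arb w u :=
                  aux_pairwise_split hsort
                    (show l = p ++ u :: (q₁ ++ w :: q₂) by rw [hl, hqq])
                exact hno (hCOarb hCOw)
          obtain ⟨p₁, p₂, hpp⟩ := List.append_of_mem hwp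
          have hnwp₂ : ∀ e ∈ p₂.map g, ¬ isWrLabOn x e := by
            intro e hme hwr
            obtain ⟨d'', hd''⟩ := hwr
            obtain ⟨u', hu'p₂, hgu'⟩ := List.mem_map.mp hme
            have hlabu' : h.lab u' = wrLab x d'' := (hg_wr u' x d'').mp (hgu'.trans hd'')
            have hu'p : u' ∈ p := by rw [hpp]; simp [hu'p₂]
            have hu'no : u' ≠ u := fun e' => honp (e' ▸ hu'p)
            have hu'l : u' ∈ l := by rw [hl]; simp [hu'p]
            have hCOu' : CO h u' u := by
              rcases (hmeml u').mp hu'l with h1 | h2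
              · exact h1
              · exact absurd h2 hu'no
            have hdne : d'' ≠ v := by
              intro e'
              have hu'w : u' = w := hdiff.1 u' w x v (by rw [hlabu', e']) hlabw
              have hnd2 : (p₁ ++ w :: (p₂ ++ u :: q)).Nodup := by
                have he2 : l = p₁ ++ w :: (p₂ ++ u :: q) := by rw [hl, hpp]; simp
                exact he2 ▸ hndl
              have hwn : w ∉ p₂ ++ u :: q := (aux_nodup_mid hnd2).2
              exact hwn (List.mem_append.mpr (Or.inl (hu'w ▸ hu'p₂)))
            have hcf : CF h u' w := ⟨x, d'', v, u, hdne, hlabu', hlabw, hlab, hCOu'⟩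
            have hno : ¬ arb u' w := by
              obtain ⟨y₁, y₂, hyy⟩ := List.append_of_mem hu'p₂
              exact aux_pairwise_split hsort
                (show l = p₁ ++ w :: (y₁ ++ u' :: (y₂ ++ u :: q)) by
                  rw [hl, hpp, hyy]; simp)
            exact hno (hCFarb hcf)
          have heq2 : p.map g = p₁.map g ++ wrLab x v :: p₂.map g := by
            rw [hpp, List.map_append, List.map_cons, (hg_wr w x v).mpr hlabw]
          rw [lastVal_eq_of (p₁.map g) (p₂.map g) heq2 hnwp₂]
      · rw [hg_rdform u x v huo hlab, hpre, hcong x, hp]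
end

section
/- If a differentiated history h is CM with respect to S_RW, witnessed by a causal order co and sequences ρ_o, then for every operation o and every pair o₁, o₂ in the causal past of o, o₁ <_{HB_o} o₂ implies that o₁ occurs before o₂ in the sequence ρ_o. -/
/-- the happened-before relation `HB_o` for an operation `o`: the smallest
transitive relation containing the restriction of `CO` to the causal past of
`o` (w.r.t. `CO`) and closed under: if `w₁ <_HB r₂`, `r₂ ≤_PO o`,
`w₁ = wr(x,d₁)`, `w₂ = wr(x,d₂)`, `r₂ = rd(x) ▷ d₂`, `d₁ ≠ d₂`, then
`w₁ <_HB w₂`. -/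
inductive HB {O X : Type} (h : History O RWM (RWD X)) (o : O) : O → O → Prop
  | base {a b : O} : CO h a b → (CO h a o ∨ a = o) → (CO h b o ∨ b = o) →
      HB h o a b
  | trans {a b c : O} : HB h o a b → HB h o b c → HB h o a c
  | rw {w₁ w₂ r₂ : O} {x : X} {d₁ d₂ : ℕ} :
      HB h o w₁ r₂ → (h.po r₂ o ∨ r₂ = o) →
      h.lab w₁ = wrLab x d₁ → h.lab w₂ = wrLab x d₂ →
      h.lab r₂ = rdLab x d₂ → d₁ ≠ d₂ →
      HB h o w₁ w₂


section AuxLemmas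

variable {X : Type}

/-- every element of a sequence in `S_RW` is a proper write or read label -/
lemma srw_elem {ρ : List (RWM × RWD X × RWD X)} (hρ : SRW ρ) :
    ∀ e ∈ ρ, (∃ x v, e = wrLab x v) ∨ (∃ x v, e = rdLab x v) := by
  induction hρ with
  | nil => simp
  | wr σ x v hσ ih =>
      intro e he
      rcases List.mem_append.1 he with h' | h'
      · exact ih e h'
      · exact Or.inl ⟨x, v, by simpa using h'⟩
  | rd0 σ x hσ hno ih =>
      intro e he
      rcases List.mem_append.1 he with h' | h'
      · exact ih e h'
      · exact Or.inr ⟨x, 0, by simpa using h'⟩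
  | rd ρ₁ ρ₂ x v hσ hno ih =>
      intro e he
      rcases List.mem_append.1 he with h' | h'
      · exact ih e h'
      · exact Or.inr ⟨x, v, by simpa using h'⟩

/-- in a sequence of `S_RW`, a read of a nonzero value is preceded by the
corresponding write, with no intervening write on the same variable -/
lemma srw_read_from {ρ : List (RWM × RWD X × RWD X)} (hρ : SRW ρ) :
    ∀ (j : ℕ) (hj : j < ρ.length) (x : X) (d : ℕ), d ≠ 0 →
      ρ[j] = rdLab x d →
      ∃ (i : ℕ) (hi : i < ρ.length), i < j ∧ ρ[i] = wrLab x d ∧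
        ∀ (k : ℕ) (hk : k < ρ.length), i < k → k < j → ¬ isWrLabOn x ρ[k] := by
  induction hρ with
  | nil => intro j hj; simp at hj
  | wr σ x' v hσ ih =>
      intro j hj x d hd hread
      have hj' : j < σ.length ∨ j = σ.length := by
        have := hj; simp at this; omega
      rcases hj' with hj' | hj'
      · rw [List.getElem_append_left hj'] at hread
        obtain ⟨i, hi, hij, hwi, hno⟩ := ih j hj' x d hd hread
        refine ⟨i, by simp; omega, hij, ?_, ?_⟩
        · rw [List.getElem_append_left hi]; exact hwi
        · intro k hk h1 h2
          have hk' : k < σ.length := by omega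
          rw [List.getElem_append_left hk']
          exact hno k hk' h1 h2
      · subst hj'
        rw [List.getElem_append_right (le_refl _)] at hread
        simp at hread
        exact absurd hread wrLab_ne_rdLab
  | rd0 σ x' hσ hno0 ih =>
      intro j hj x d hd hread
      have hj' : j < σ.length ∨ j = σ.length := by
        have := hj; simp at this; omega
      rcases hj' with hj' | hj'
      · rw [List.getElem_append_left hj'] at hread
        obtain ⟨i, hi, hij, hwi, hno⟩ := ih j hj' x d hd hread
        refine ⟨i, by simp; omega, hij, ?_, ?_⟩
        · rw [List.getElem_append_left hi]; exact hwi
        · intro k hk h1 h2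
          have hk' : k < σ.length := by omega
          rw [List.getElem_append_left hk']
          exact hno k hk' h1 h2
      · subst hj'
        rw [List.getElem_append_right (le_refl _)] at hread
        simp at hread
        exact absurd (rdLab_inj hread).2.symm hd
  | rd ρ₁ ρ₂ x' v hσ hno2 ih =>
      intro j hj x d hd hread
      have hj' : j < (ρ₁ ++ [wrLab x' v] ++ ρ₂).length ∨ j = (ρ₁ ++ [wrLab x' v] ++ ρ₂).length := by
        have := hj; simp at this ⊢; omega
      rcases hj' with hj' | hj'
      · rw [List.getElem_append_left hj'] at hread
        obtain ⟨i, hi, hij, hwi, hno⟩ := ih j hj' x d hd hread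
        refine ⟨i, by simp at hi ⊢; omega, hij, ?_, ?_⟩
        · rw [List.getElem_append_left hi]; exact hwi
        · intro k hk h1 h2
          have hk' : k < (ρ₁ ++ [wrLab x' v] ++ ρ₂).length := by omega
          rw [List.getElem_append_left hk']
          exact hno k hk' h1 h2
      · subst hj'
        rw [List.getElem_append_right (le_refl _)] at hread
        simp at hread
        obtain ⟨hx, hv⟩ := rdLab_inj hread
        subst hx; subst hv
        have hlen1 : ρ₁.length < (ρ₁ ++ [wrLab x' v] ++ ρ₂ ++ [rdLab x' v]).length := by
          simp; try omega
        refine ⟨ρ₁.length, hlen1, by simp; try omega, ?_, ?_⟩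
        · have h1 : ρ₁.length < (ρ₁ ++ [wrLab x' v] ++ ρ₂).length := by simp; try omega
          rw [List.getElem_append_left h1]
          have h2 : ρ₁.length < (ρ₁ ++ [wrLab x' v]).length := by simp
          rw [List.getElem_append_left h2]
          rw [List.getElem_append_right (le_refl _)]
          simp
        · intro k hk h1 h2
          have hk1 : k < (ρ₁ ++ [wrLab x' v] ++ ρ₂).length := by
            simp at h2 ⊢; omega
          rw [List.getElem_append_left hk1]
          have hge : (ρ₁ ++ [wrLab x' v]).length ≤ k := by simp; omega
          rw [List.getElem_append_right hge]
          apply hno2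
          exact List.getElem_mem _

end AuxLemmas

/-- If a differentiated history is CM w.r.t. `S_RW` witnessed by a causal
order `co` and, for each `o`, a sequentialization `ρ_o = (l o).map (g o)` in
`S_RW`, then every `HB_o` edge between operations of the causal past of `o`
is respected by `ρ_o`: `o₁ <_{HB_o} o₂` implies `o₁` occurs before `o₂`. -/
theorem hb_respected_by_cm_witness {O X : Type} (h : History O RWM (RWD X))
    (hdiff : Differentiated h)
    (co : O → O → Prop) (hspo : IsSPO co)
    (hpo : ∀ a b, h.po a b → co a b)
    (l : O → List O) (g : O → O → RWM × RWD X × RWD X)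
    (hwit : ∀ o, LinWitness (CausalPast co o) co (POPast h o) h.lab (l o) (g o) ∧
      SRW ((l o).map (g o))) :
    ∀ o o₁ o₂, o₁ ∈ CausalPast co o → o₂ ∈ CausalPast co o →
      HB h o o₁ o₂ →
      ∀ (i j : Fin (l o).length),
        (l o).get i = o₁ → (l o).get j = o₂ → (i : ℕ) < (j : ℕ) := by
  have hnodup : ∀ o, (l o).Nodup := fun o => ((hwit o).1).1
  have hmem : ∀ o a, a ∈ l o ↔ a ∈ CausalPast co o := fun o => ((hwit o).1).2.1
  have hord : ∀ o (i j : Fin (l o).length), co ((l o).get i) ((l o).get j) → (i:ℕ) < (j:ℕ) :=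
    fun o => ((hwit o).1).2.2.1
  have hkeep : ∀ o a, a ∈ l o → a ∈ POPast h o → g o a = h.lab a :=
    fun o => ((hwit o).1).2.2.2.1
  have hma : ∀ o a, a ∈ l o → (g o a).1 = (h.lab a).1 ∧ (g o a).2.1 = (h.lab a).2.1 :=
    fun o => ((hwit o).1).2.2.2.2
  have hsrw : ∀ o, SRW ((l o).map (g o)) := fun o => (hwit o).2
  -- every operation's label is a proper write or read label
  have hA : ∀ a : O, (∃ x v, h.lab a = wrLab x v) ∨ (∃ x v, h.lab a = rdLab x v) := by
    intro a
    have ha : a ∈ l a := (hmem a a).2 (Or.inr rfl)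
    have hg : g a a = h.lab a := hkeep a a ha (Or.inr rfl)
    have hm : g a a ∈ (l a).map (g a) := List.mem_map_of_mem ha
    rw [hg] at hm
    exact srw_elem (hsrw a) _ hm
  have lab_of_g_wr : ∀ o a, a ∈ l o → ∀ x d, g o a = wrLab x d → h.lab a = wrLab x d := by
    intro o a ha x d hg
    obtain ⟨h1, h2⟩ := hma o a ha
    rw [hg] at h1 h2
    rcases hA a with ⟨x', v', hw⟩ | ⟨x', v', hr⟩
    · rw [hw] at h2 ⊢
      simp [wrLab] at h2 ⊢
      exact ⟨h2.1.symm, h2.2.symm⟩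
    · rw [hr] at h1
      simp [wrLab, rdLab] at h1
  have g_of_lab_wr : ∀ o a, a ∈ l o → ∀ x d, h.lab a = wrLab x d → g o a = wrLab x d := by
    intro o a ha x d hlab
    obtain ⟨h1, h2⟩ := hma o a ha
    rw [hlab] at h1 h2
    have hm : g o a ∈ (l o).map (g o) := List.mem_map_of_mem ha
    rcases srw_elem (hsrw o) _ hm with ⟨x', v', hw⟩ | ⟨x', v', hr⟩
    · rw [hw] at h1 h2 ⊢
      simp [wrLab] at h2 ⊢
      exact h2
    · rw [hr] at h1
      simp [wrLab, rdLab] at h1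
  -- RF ⊆ co
  have hrf : ∀ a b, RF h a b → co a b := by
    rintro a b ⟨x, d, hwa, hrb⟩
    have hd0 : d ≠ 0 := by
      intro hd; subst hd; exact hdiff.2 a x hwa
    have hbmem : b ∈ l b := (hmem b b).2 (Or.inr rfl)
    obtain ⟨jb, hjb⟩ := List.mem_iff_get.1 hbmem
    have hlen : ((l b).map (g b)).length = (l b).length := List.length_map _
    have hjb' : (jb:ℕ) < ((l b).map (g b)).length := by rw [hlen]; exact jb.isLt
    have hget : ((l b).map (g b))[(jb:ℕ)] = rdLab x d := by
      rw [List.getElem_map, ← List.get_eq_getElem, hjb]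
      rw [hkeep b b hbmem (Or.inr rfl), hrb]
    obtain ⟨i, hi, hij, hwi, -⟩ := srw_read_from (hsrw b) jb hjb' x d hd0 hget
    rw [List.getElem_map] at hwi
    have hlw : h.lab ((l b)[i]'(by rw [← hlen]; exact hi)) = wrLab x d :=
      lab_of_g_wr b _ (List.getElem_mem _) x d hwi
    have heq : (l b)[i]'(by rw [← hlen]; exact hi) = a := hdiff.1 _ _ x d hlw hwa
    have hmem' : a ∈ l b := by rw [← heq]; exact List.getElem_mem _
    rcases (hmem b a).1 hmem' with hc | hc
    · exact hc
    · rw [hc] at hwa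
      rw [hwa] at hrb
      exact absurd hrb wrLab_ne_rdLab
  -- CO ⊆ co
  have hCO : ∀ a b, CO h a b → co a b := by
    intro a b hab
    induction hab with
    | single h' =>
      rcases h' with h' | h'
      · exact hpo _ _ h'
      · exact hrf _ _ h'
    | tail hab h' ih =>
      rcases h' with h' | h'
      · exact hspo.2 _ _ _ ih (hpo _ _ h')
      · exact hspo.2 _ _ _ ih (hrf _ _ h')
  -- endpoints of HB edges lie in the causal past
  have hends : ∀ o a b, HB h o a b → a ∈ CausalPast co o ∧ b ∈ CausalPast co o := by
    intro o a b hb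
    induction hb with
    | base hab ha hb' =>
      constructor
      · rcases ha with ha | ha
        · exact Or.inl (hCO _ _ ha)
        · exact Or.inr ha
      · rcases hb' with hb' | hb'
        · exact Or.inl (hCO _ _ hb')
        · exact Or.inr hb'
    | trans h1 h2 ih1 ih2 => exact ⟨ih1.1, ih2.2⟩
    | @rw w₁ w₂ r₂ x d₁ d₂ h1 h2 hw1 hw2 hr2 hne ih =>
      refine ⟨ih.1, ?_⟩
      have hc : co w₂ r₂ := hrf _ _ ⟨x, d₂, hw2, hr2⟩
      rcases h2 with h2 | h2
      · exact Or.inl (hspo.2 _ _ _ hc (hpo _ _ h2))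
      · subst h2; exact Or.inl hc
  -- main induction on HB
  intro o o₁ o₂ hm1 hm2 hhb
  clear hm1 hm2
  induction hhb with
  | @base a b hab ha hb' =>
    intro i j hi hj
    apply hord o i j
    rw [hi, hj]
    exact hCO _ _ hab
  | @trans a b c h1 h2 ih1 ih2 =>
    intro i j hi hj
    have hbmem : b ∈ l o := (hmem o b).2 (hends o a b h1).2
    obtain ⟨k, hk⟩ := List.mem_iff_get.1 hbmem
    exact lt_trans (ih1 i k hi hk) (ih2 k j hk hj)
  | @rw w₁ w₂ r₂ x d₁ d₂ h1 h2 hw1 hw2 hr2 hne ih =>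
    intro i j hi hj
    have hr2m : r₂ ∈ l o := (hmem o r₂).2 (hends o _ _ h1).2
    obtain ⟨k, hk⟩ := List.mem_iff_get.1 hr2m
    have hik : (i:ℕ) < (k:ℕ) := ih i k hi hk
    have hlen : ((l o).map (g o)).length = (l o).length := List.length_map _
    have hk' : (k:ℕ) < ((l o).map (g o)).length := by rw [hlen]; exact k.isLt
    have hgetk : ((l o).map (g o))[(k:ℕ)] = rdLab x d₂ := by
      rw [List.getElem_map, ← List.get_eq_getElem, hk]
      rw [hkeep o r₂ hr2m h2, hr2]
    have hd2 : d₂ ≠ 0 := by intro h0; subst h0; exact hdiff.2 w₂ x hw2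
    obtain ⟨p, hp, hpk, hwp, hno⟩ := srw_read_from (hsrw o) k hk' x d₂ hd2 hgetk
    have hi' : (i:ℕ) < ((l o).map (g o)).length := by rw [hlen]; exact i.isLt
    have hw1m : w₁ ∈ l o := by
      rw [← hi, List.get_eq_getElem]; exact List.getElem_mem _
    have hgeti : ((l o).map (g o))[(i:ℕ)] = wrLab x d₁ := by
      rw [List.getElem_map, ← List.get_eq_getElem, hi]
      exact g_of_lab_wr o w₁ hw1m x d₁ hw1
    have hip : (i:ℕ) < p := by
      rcases lt_trichotomy (i:ℕ) p with hlt | heq | hgt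
      · exact hlt
      · exfalso
        subst heq
        rw [hgeti] at hwp
        exact hne (wrLab_inj hwp).2
      · exact absurd ⟨d₁, hgeti⟩ (hno (i:ℕ) hi' hgt hik)
    have hp' : p < (l o).length := by rw [← hlen]; exact hp
    rw [List.getElem_map] at hwp
    have hlp : h.lab ((l o)[p]'hp') = wrLab x d₂ :=
      lab_of_g_wr o _ (List.getElem_mem _) x d₂ hwp
    have hpw2 : (l o)[p]'hp' = w₂ := hdiff.1 _ _ x d₂ hlp hw2
    have hjeq : j = ⟨p, hp'⟩ := by
      apply ((hnodup o).get_inj_iff).1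
      rw [hj, List.get_eq_getElem]
      exact hpw2.symm
    rw [hjeq]
    exact hip
end
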